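/- arXiv:1009.5656 — 2 statements merged into one kernel-verified Lean document; each statement's English description precedes it below -/
import Mathlib

section
/- An orientation-preserving diffeomorphism α of (0,∞) onto itself fixing only 0 and ∞ is a slowly oscillating shift (i.e., log α' is bounded and α' is slowly oscillating) if and only if α(t) = t·e^{ω(t)} for some real-valued C¹ function ω that is slowly oscillating, such that t ↦ t·ω'(t) is slowly oscillating and inf_{t>0}(1 + t·ω'(t)) > 0. -/
/-!
With `ω t = log (α t / t)` one has `α' = exp ω * (1 + t * ω')`, so boundedness and slow
oscillation pass from `ω` and `t * ω'` to `α'` through a local Lipschitz estimate.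

Conversely, `|log α'| ≤ C`, continuity and monotonicity trap `α'`, and hence `α t / t`, between
`exp (-C)` and `exp C`. The mean value theorem on `[l t, t]` gives
`|α' t - α t / t| ≤ osc α' (l t) t + 2 exp C * l` for every `l ∈ (0, 1)`, so
`t * ω' t = (t / α t) * (α' t - α t / t)` tends to `0` at `0` and at `∞`. This makes `t * ω'`
slowly oscillating and, by the mean value theorem once more, `ω` as well.
-/

open Filter Set

noncomputable def osc {E : Type*} [NormedAddCommGroup E] (f : ℝ → E) (a b : ℝ) : ℝ :=
  sSup {d | ∃ t ∈ Set.Icc a b, ∃ τ ∈ Set.Icc a b, d = ‖f t - f τ‖}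

/-- Bounded continuous slowly oscillating (at `0` and `∞`) function on `(0,∞)`. -/
def SO {E : Type*} [NormedAddCommGroup E] (f : ℝ → E) : Prop :=
  ContinuousOn f (Set.Ioi 0) ∧ (∃ C, ∀ t ∈ Set.Ioi (0:ℝ), ‖f t‖ ≤ C) ∧
  ∀ l ∈ Set.Ioo (0:ℝ) 1,
    Tendsto (fun r => osc f (l * r) r) (nhdsWithin 0 (Set.Ioi 0)) (nhds 0) ∧
    Tendsto (fun r => osc f (l * r) r) atTop (nhds 0)

open Real Topology

section Oscillation

variable {E : Type*} [NormedAddCommGroup E] {f : ℝ → E} {a b : ℝ}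

lemma osc_nonneg (f : ℝ → E) (a b : ℝ) : 0 ≤ osc f a b :=
  Real.sSup_nonneg fun _ ⟨_, _, _, _, hd⟩ => hd ▸ norm_nonneg _

lemma osc_le {d : ℝ} (hd : 0 ≤ d) (h : ∀ t ∈ Icc a b, ∀ τ ∈ Icc a b, ‖f t - f τ‖ ≤ d) :
    osc f a b ≤ d :=
  Real.sSup_le (fun _ ⟨t, ht, τ, hτ, he⟩ => he ▸ h t ht τ hτ) hd

lemma norm_sub_le_osc (hf : ContinuousOn f (Icc a b)) {t τ : ℝ} (ht : t ∈ Icc a b)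
    (hτ : τ ∈ Icc a b) : ‖f t - f τ‖ ≤ osc f a b := by
  obtain ⟨M, hM⟩ := isCompact_Icc.exists_bound_of_continuousOn hf
  refine le_csSup ⟨M + M, ?_⟩ ⟨t, ht, τ, hτ, rfl⟩
  rintro _ ⟨u, hu, v, hv, rfl⟩
  exact (norm_sub_le _ _).trans (add_le_add (hM u hu) (hM v hv))

lemma osc_le_of_abs_mul_deriv_le {f f' : ℝ → ℝ} {ε : ℝ} (ha : 0 < a) (hab : a ≤ b)
    (hd : ∀ u ∈ Icc a b, HasDerivAt f (f' u) u) (hε : ∀ u ∈ Icc a b, |u * f' u| ≤ ε) :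
    osc f a b ≤ ε / a * (b - a) := by
  have hε0 : 0 ≤ ε := (abs_nonneg _).trans (hε a ⟨le_rfl, hab⟩)
  have hf' : ∀ u ∈ Icc a b, ‖f' u‖ ≤ ε / a := fun u hu => by
    rw [le_div_iff₀ ha, Real.norm_eq_abs]
    calc |f' u| * a ≤ |f' u| * u := by gcongr; exact hu.1
      _ = |u * f' u| := by rw [abs_mul, abs_of_pos (ha.trans_le hu.1), mul_comm]
      _ ≤ ε := hε u hu
  refine osc_le (by have := sub_nonneg.2 hab; positivity) fun t ht τ hτ => ?_
  calc ‖f t - f τ‖ ≤ ε / a * ‖t - τ‖ :=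
        (convex_Icc a b).norm_image_sub_le_of_norm_hasDerivWithin_le
          (fun u hu => (hd u hu).hasDerivWithinAt) hf' hτ ht
    _ ≤ ε / a * (b - a) := by
        gcongr
        rw [Real.norm_eq_abs, abs_le]
        constructor <;> linarith [ht.1, ht.2, hτ.1, hτ.2]

end Oscillation

section DilationFilter

variable {F : Filter ℝ} {l : ℝ}

lemma tendsto_Icc_mul_nhdsGT_zero_smallSets (hl : 0 < l) :
    Tendsto (fun r => Icc (l * r) r) (𝓝[>] 0) (𝓝[>] 0).smallSets := by
  refine Tendsto.Icc ?_ tendsto_id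
  refine tendsto_nhdsWithin_of_tendsto_nhds_of_eventually_within _ ?_ ?_
  · simpa using ((continuous_const_mul l).tendsto 0).mono_left nhdsWithin_le_nhds
  · filter_upwards [self_mem_nhdsWithin] with r hr using mul_pos hl hr

lemma tendsto_Icc_mul_atTop_smallSets (hl : 0 < l) :
    Tendsto (fun r => Icc (l * r) r) atTop (atTop : Filter ℝ).smallSets :=
  Tendsto.Icc (tendsto_id.const_mul_atTop hl) tendsto_id

lemma tendsto_osc_of_tendsto {E : Type*} [NormedAddCommGroup E] {f : ℝ → E} {c : E}
    {a b : ℝ → ℝ} {G : Filter ℝ} (hab : Tendsto (fun r => Icc (a r) (b r)) F G.smallSets)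
    (hf : Tendsto f G (𝓝 c)) : Tendsto (fun r => osc f (a r) (b r)) F (𝓝 0) := by
  refine Metric.tendsto_nhds.2 fun ε hε => ?_
  have hnear := eventually_smallSets_forall.2 (Metric.tendsto_nhds.1 hf (ε / 3) (by positivity))
  filter_upwards [hab.eventually hnear] with r hr
  have hosc : osc f (a r) (b r) ≤ ε / 3 + ε / 3 := by
    refine osc_le (by positivity) fun t ht τ hτ => ?_
    rw [← dist_eq_norm]
    exact (dist_triangle_right _ _ c).trans (add_le_add (hr t ht).le (hr τ hτ).le)
  rw [Real.dist_eq, sub_zero, abs_of_nonneg (osc_nonneg _ _ _)]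
  linarith

lemma tendsto_osc_of_tendsto_mul_deriv {f f' : ℝ → ℝ}
    (hd : ∀ t ∈ Ioi 0, HasDerivAt f (f' t) t) (hl : l ∈ Ioo 0 1)
    (hF : Tendsto (fun r => Icc (l * r) r) F F.smallSets) (hpos : ∀ᶠ r in F, 0 < r)
    (h : Tendsto (fun t => t * f' t) F (𝓝 0)) :
    Tendsto (fun r => osc f (l * r) r) F (𝓝 0) := by
  refine Metric.tendsto_nhds.2 fun ε hε => ?_
  have hnear := eventually_smallSets_forall.2
    (Metric.tendsto_nhds.1 h (ε * l) (mul_pos hε hl.1))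
  filter_upwards [hF.eventually hnear, hpos] with r hr hr0
  have hlr : 0 < l * r := mul_pos hl.1 hr0
  have hosc := osc_le_of_abs_mul_deriv_le (f := f) hlr
    (mul_le_of_le_one_left hr0.le hl.2.le) (fun u hu => hd u (hlr.trans_le hu.1))
    (fun u hu => by simpa using (hr u hu).le)
  rw [Real.dist_eq, sub_zero, abs_of_nonneg (osc_nonneg _ _ _)]
  calc osc f (l * r) r ≤ ε * l / (l * r) * (r - l * r) := hosc
    _ = ε * (1 - l) := by field_simp [hl.1.ne']
    _ < ε := by nlinarith [hl.1]

end DilationFilter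

lemma SO.of_tendsto {E : Type*} [NormedAddCommGroup E] {f : ℝ → E} {c₀ c₁ : E}
    (hc : ContinuousOn f (Ioi 0)) (hb : ∃ C, ∀ t ∈ Ioi (0:ℝ), ‖f t‖ ≤ C)
    (h0 : Tendsto f (𝓝[>] 0) (𝓝 c₀)) (htop : Tendsto f atTop (𝓝 c₁)) : SO f :=
  ⟨hc, hb, fun _ hl => ⟨tendsto_osc_of_tendsto (tendsto_Icc_mul_nhdsGT_zero_smallSets hl.1) h0,
    tendsto_osc_of_tendsto (tendsto_Icc_mul_atTop_smallSets hl.1) htop⟩⟩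

lemma SO.of_tendsto_mul_deriv {f f' : ℝ → ℝ} (hd : ∀ t ∈ Ioi (0:ℝ), HasDerivAt f (f' t) t)
    (hb : ∃ C, ∀ t ∈ Ioi (0:ℝ), ‖f t‖ ≤ C) (h0 : Tendsto (fun t => t * f' t) (𝓝[>] 0) (𝓝 0))
    (htop : Tendsto (fun t => t * f' t) atTop (𝓝 0)) : SO f :=
  ⟨fun t ht => (hd t ht).continuousAt.continuousWithinAt, hb, fun _ hl =>
    ⟨tendsto_osc_of_tendsto_mul_deriv hd hl (tendsto_Icc_mul_nhdsGT_zero_smallSets hl.1)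
      self_mem_nhdsWithin h0,
    tendsto_osc_of_tendsto_mul_deriv hd hl (tendsto_Icc_mul_atTop_smallSets hl.1)
      (eventually_gt_atTop 0) htop⟩⟩

lemma SO.of_norm_sub_le {E F G : Type*} [NormedAddCommGroup E] [NormedAddCommGroup F]
    [NormedAddCommGroup G] {f : ℝ → E} {g : ℝ → F} {h : ℝ → G} (hf : SO f) (hg : SO g)
    (hc : ContinuousOn h (Ioi 0)) (hb : ∃ C, ∀ t ∈ Ioi (0:ℝ), ‖h t‖ ≤ C) {K₁ K₂ : ℝ}
    (hK₁ : 0 ≤ K₁) (hK₂ : 0 ≤ K₂)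
    (hK : ∀ t ∈ Ioi (0:ℝ), ∀ τ ∈ Ioi (0:ℝ),
      ‖h t - h τ‖ ≤ K₁ * ‖f t - f τ‖ + K₂ * ‖g t - g τ‖) : SO h := by
  refine ⟨hc, hb, fun l hl => ?_⟩
  have hosc : ∀ r > 0, osc h (l * r) r ≤ K₁ * osc f (l * r) r + K₂ * osc g (l * r) r := by
    intro r hr
    have hsub : Icc (l * r) r ⊆ Ioi 0 := fun u hu => (mul_pos hl.1 hr).trans_le hu.1
    have := osc_nonneg f (l * r) r
    have := osc_nonneg g (l * r) r
    refine osc_le (by positivity) fun t ht τ hτ => (hK t (hsub ht) τ (hsub hτ)).trans ?_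
    gcongr
    · exact norm_sub_le_osc (hf.1.mono hsub) ht hτ
    · exact norm_sub_le_osc (hg.1.mono hsub) ht hτ
  have key : ∀ F : Filter ℝ, (∀ᶠ r in F, 0 < r) →
      Tendsto (fun r => osc f (l * r) r) F (𝓝 0) → Tendsto (fun r => osc g (l * r) r) F (𝓝 0) →
      Tendsto (fun r => osc h (l * r) r) F (𝓝 0) := by
    intro F hpos hfF hgF
    refine squeeze_zero' (Eventually.of_forall fun r => osc_nonneg h _ _)
      (hpos.mono hosc) ?_
    simpa using (hfF.const_mul K₁).add (hgF.const_mul K₂)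
  exact ⟨key _ self_mem_nhdsWithin (hf.2.2 l hl).1 (hg.2.2 l hl).1,
    key _ (eventually_gt_atTop 0) (hf.2.2 l hl).2 (hg.2.2 l hl).2⟩

lemma Real.abs_exp_sub_exp_le {x y C : ℝ} (hx : x ≤ C) (hy : y ≤ C) :
    |exp x - exp y| ≤ exp C * |x - y| :=
  (convex_Iic C).norm_image_sub_le_of_norm_hasDerivWithin_le
    (fun u _ => (hasDerivAt_exp u).hasDerivWithinAt)
    (fun u hu => by rw [Real.norm_eq_abs, abs_of_pos (exp_pos u)]; exact exp_le_exp.2 hu) hy hx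

lemma Real.exp_neg_le_of_abs_log_le {x C : ℝ} (hx : 0 < x) (h : |log x| ≤ C) : exp (-C) ≤ x :=
  (le_log_iff_exp_le hx).1 (neg_le_of_abs_le h)

lemma exp_neg_le_of_abs_log_le_of_isPreconnected {f : ℝ → ℝ} {s : Set ℝ} {C t₀ : ℝ}
    (hs : IsPreconnected s) (hf : ContinuousOn f s) (hC : ∀ t ∈ s, |log (f t)| ≤ C)
    (ht₀ : t₀ ∈ s) (hpos : 0 < f t₀) {t : ℝ} (ht : t ∈ s) : exp (-C) ≤ f t := by
  by_contra hlt
  have hft : f t ≤ 0 := not_lt.1 fun h => hlt (exp_neg_le_of_abs_log_le h (hC t ht))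
  have hhalf : exp (-C) / 2 < exp (-C) := half_lt_self (exp_pos _)
  -- `log 0 = 0` and `log` is even, so only continuity excludes values `≤ 0`
  obtain ⟨u, hu, hfu⟩ := hs.intermediate_value ht ht₀ hf
    ⟨hft.trans (by positivity), hhalf.le.trans (exp_neg_le_of_abs_log_le hpos (hC t₀ ht₀))⟩
  have := exp_neg_le_of_abs_log_le (hfu ▸ half_pos (exp_pos _)) (hC u hu)
  linarith

lemma mul_le_of_le_deriv_of_tendsto_zero {f f' : ℝ → ℝ} {m t : ℝ}
    (hd : ∀ u ∈ Ioi (0:ℝ), HasDerivAt f (f' u) u) (h0 : Tendsto f (𝓝[>] 0) (𝓝 0))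
    (hm : ∀ u ∈ Ioi (0:ℝ), m ≤ f' u) (ht : 0 < t) : m * t ≤ f t := by
  have hslope : ∀ s ∈ Ioo 0 t, m * (t - s) ≤ f t - f s := fun s hs =>
    (convex_Ioi 0).mul_sub_le_image_sub_of_le_deriv
      (fun u hu => (hd u hu).continuousAt.continuousWithinAt)
      (fun u hu => (hd u (interior_subset hu)).differentiableAt.differentiableWithinAt)
      (fun u hu => (hd u (interior_subset hu)).deriv ▸ hm u (interior_subset hu))
      s hs.1 t ht hs.2.le
  have hid : Tendsto (fun s : ℝ => s) (𝓝[>] 0) (𝓝 0) :=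
    tendsto_nhdsWithin_of_tendsto_nhds tendsto_id
  have hlim : Tendsto (fun s => f s + m * (t - s)) (𝓝[>] 0) (𝓝 (m * t)) := by
    simpa using h0.add ((hid.const_sub t).const_mul m)
  refine le_of_tendsto hlim ?_
  filter_upwards [Ioo_mem_nhdsGT ht] with s hs
  linarith [hslope s hs]

lemma le_mul_of_deriv_le_of_tendsto_zero {f f' : ℝ → ℝ} {M t : ℝ}
    (hd : ∀ u ∈ Ioi (0:ℝ), HasDerivAt f (f' u) u) (h0 : Tendsto f (𝓝[>] 0) (𝓝 0))
    (hM : ∀ u ∈ Ioi (0:ℝ), f' u ≤ M) (ht : 0 < t) : f t ≤ M * t := by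
  have := mul_le_of_le_deriv_of_tendsto_zero (f := fun u => -f u) (m := -M)
    (fun u hu => (hd u hu).neg) (by simpa using h0.neg) (fun u hu => neg_le_neg (hM u hu)) ht
  linarith

lemma abs_deriv_sub_div_le {f f' : ℝ → ℝ} {M l t : ℝ}
    (hd : ∀ u ∈ Ioi (0:ℝ), HasDerivAt f (f' u) u) (hc : ContinuousOn f' (Ioi 0))
    (hf' : ∀ u ∈ Ioi (0:ℝ), |f' u| ≤ M) (hf : ∀ u ∈ Ioi (0:ℝ), |f u| ≤ M * u)
    (hl : l ∈ Ioo 0 1) (ht : 0 < t) :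
    |f' t - f t / t| ≤ osc f' (l * t) t + 2 * M * l := by
  have hlt : 0 < l * t := mul_pos hl.1 ht
  have hsub : Icc (l * t) t ⊆ Ioi 0 := fun u hu => hlt.trans_le hu.1
  have hright : t ∈ Icc (l * t) t := ⟨mul_le_of_le_one_left ht.le hl.2.le, le_rfl⟩
  have hleft : l * t ∈ Icc (l * t) t := ⟨le_rfl, hright.1⟩
  set A := f t - f (l * t) - (t - l * t) * f' t
  have hA : |A| ≤ osc f' (l * t) t * (t - l * t) := by
    have := (convex_Icc (l * t) t).norm_image_sub_le_of_norm_hasDerivWithin_le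
      (f := fun u => f u - u * f' t) (f' := fun u => f' u - f' t)
      (fun u hu => ((hd u (hsub hu)).sub ((hasDerivAt_id u).mul_const (f' t))).hasDerivWithinAt
        |>.congr_deriv (by simp))
      (fun u hu => norm_sub_le_osc (hc.mono hsub) hu hright) hleft hright
    simp only [Real.norm_eq_abs, abs_of_nonneg (sub_nonneg.2 hright.1)] at this
    convert this using 2
    ring
  have hsplit : f' t - f t / t = -(A + f (l * t) - l * t * f' t) / t := by
    simp only [A]
    field_simp
    ring
  rw [hsplit, abs_div, abs_neg, abs_of_pos ht, div_le_iff₀ ht]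
  calc |A + f (l * t) - l * t * f' t| ≤ |A| + |f (l * t)| + l * t * |f' t| := by
        refine (abs_sub _ _).trans (add_le_add (abs_add_le _ _) ?_)
        rw [abs_mul, abs_of_pos hlt]
    _ ≤ osc f' (l * t) t * (t - l * t) + M * (l * t) + l * t * M := by
        gcongr
        exacts [hf _ hlt, hf' t ht]
    _ ≤ (osc f' (l * t) t + 2 * M * l) * t := by
        nlinarith [mul_nonneg (osc_nonneg f' (l * t) t) hlt.le]

lemma tendsto_deriv_sub_div {f f' : ℝ → ℝ} {M : ℝ} {F : Filter ℝ}
    (hd : ∀ u ∈ Ioi (0:ℝ), HasDerivAt f (f' u) u) (hc : ContinuousOn f' (Ioi 0))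
    (hf' : ∀ u ∈ Ioi (0:ℝ), |f' u| ≤ M) (hf : ∀ u ∈ Ioi (0:ℝ), |f u| ≤ M * u)
    (hpos : ∀ᶠ t in F, 0 < t)
    (hosc : ∀ l ∈ Ioo (0:ℝ) 1, Tendsto (fun r => osc f' (l * r) r) F (𝓝 0)) :
    Tendsto (fun t => f' t - f t / t) F (𝓝 0) := by
  refine Metric.tendsto_nhds.2 fun ε hε => ?_
  have hM : 0 ≤ M := (abs_nonneg _).trans (hf' 1 (mem_Ioi.2 one_pos))
  set l := ε / (4 * (M + ε))
  have hl : l ∈ Ioo (0:ℝ) 1 :=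
    ⟨by positivity, (div_lt_one (by positivity)).2 (by linarith)⟩
  have hMl : 2 * M * l < ε / 2 := by
    rw [mul_div_assoc', div_lt_iff₀ (by positivity)]
    nlinarith
  filter_upwards [hpos, Metric.tendsto_nhds.1 (hosc l hl) (ε / 2) (half_pos hε)] with t ht hosct
  rw [Real.dist_eq, sub_zero] at hosct ⊢
  calc _ ≤ osc f' (l * t) t + 2 * M * l := abs_deriv_sub_div_le hd hc hf' hf hl ht
    _ < ε := by linarith [le_abs_self (osc f' (l * t) t)]

lemma tendsto_mul_div_sub_inv {α α' : ℝ → ℝ} {M : ℝ} {F : Filter ℝ} (hF : ∀ᶠ t in F, 0 < t)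
    (hα : ∀ t ∈ Ioi (0:ℝ), 0 < α t) (hM : ∀ t ∈ Ioi (0:ℝ), t / α t ≤ M)
    (h : Tendsto (fun t => α' t - α t / t) F (𝓝 0)) :
    Tendsto (fun t => t * (α' t / α t - t⁻¹)) F (𝓝 0) := by
  refine squeeze_zero_norm' (hF.mono fun t ht => ?_) (by simpa using h.abs.const_mul M)
  have hαt := hα t ht
  have hsplit : t * (α' t / α t - t⁻¹) = t / α t * (α' t - α t / t) := by
    field_simp
  rw [Real.norm_eq_abs, hsplit, abs_mul, abs_of_pos (div_pos ht hαt)]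
  gcongr
  exact hM t ht

lemma hasDerivAt_of_eqOn_mul_exp {α ω : ℝ → ℝ} {ω' : ℝ} {t : ℝ} (ht : 0 < t)
    (hform : EqOn α (fun u => u * exp (ω u)) (Ioi 0)) (hω : HasDerivAt ω ω' t) :
    HasDerivAt α (exp (ω t) * (1 + t * ω')) t := by
  refine (((hasDerivAt_id t).mul hω.exp).congr_of_eventuallyEq
    (eventually_of_mem (Ioi_mem_nhds ht) hform)).congr_deriv ?_
  simp only [id]
  ring

lemma abs_log_deriv_bdd_and_SO_deriv_of_exp_representation {α α' ω ω' : ℝ → ℝ}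
    (hderiv : ∀ t ∈ Ioi (0:ℝ), HasDerivAt α (α' t) t) (hα'c : ContinuousOn α' (Ioi 0))
    (hform : ∀ t ∈ Ioi (0:ℝ), α t = t * exp (ω t)) (hω : SO ω)
    (hωd : ∀ t ∈ Ioi (0:ℝ), HasDerivAt ω (ω' t) t) (hg : SO fun t => t * ω' t)
    {ε : ℝ} (hε : 0 < ε) (hεg : ∀ t ∈ Ioi (0:ℝ), ε ≤ 1 + t * ω' t) :
    (∃ C, ∀ t ∈ Ioi (0:ℝ), |log (α' t)| ≤ C) ∧ SO α' := by
  have hα' : ∀ t ∈ Ioi (0:ℝ), α' t = exp (ω t) * (1 + t * ω' t) := fun t ht =>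
    (hderiv t ht).unique (hasDerivAt_of_eqOn_mul_exp ht hform (hωd t ht))
  obtain ⟨Cω, hCω⟩ := hω.2.1
  obtain ⟨Cg, hCg⟩ := hg.2.1
  simp only [Real.norm_eq_abs] at hCω hCg
  have hωle : ∀ t ∈ Ioi (0:ℝ), ω t ≤ Cω := fun t ht => (le_abs_self _).trans (hCω t ht)
  have hgle : ∀ t ∈ Ioi (0:ℝ), 1 + t * ω' t ≤ 1 + Cg := fun t ht => by
    linarith [(le_abs_self _).trans (hCg t ht)]
  have hgpos : ∀ t ∈ Ioi (0:ℝ), 0 < 1 + t * ω' t := fun t ht => hε.trans_le (hεg t ht)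
  have hCg1 : 0 ≤ 1 + Cg := (hgpos 1 (mem_Ioi.2 one_pos)).le.trans (hgle 1 (mem_Ioi.2 one_pos))
  refine ⟨⟨Cω + |log ε| + |log (1 + Cg)|, fun t ht => ?_⟩, ?_⟩
  · rw [hα' t ht, log_mul (exp_ne_zero _) (hgpos t ht).ne', log_exp, abs_le]
    have hlow := log_le_log hε (hεg t ht)
    have hup := log_le_log (hgpos t ht) (hgle t ht)
    have hωt := abs_le.1 (hCω t ht)
    constructor <;> linarith [neg_abs_le (log ε), le_abs_self (log (1 + Cg)),
      abs_nonneg (log ε), abs_nonneg (log (1 + Cg))]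
  refine hω.of_norm_sub_le hg hα'c ⟨exp Cω * (1 + Cg), fun t ht => ?_⟩
    (mul_nonneg hCg1 (exp_pos Cω).le) (exp_pos Cω).le fun t ht τ hτ => ?_
  · rw [Real.norm_eq_abs, hα' t ht, abs_of_pos (mul_pos (exp_pos _) (hgpos t ht))]
    exact mul_le_mul (exp_le_exp.2 (hωle t ht)) (hgle t ht) (hgpos t ht).le (exp_pos _).le
  simp only [Real.norm_eq_abs]
  rw [hα' t ht, hα' τ hτ, show ∀ a b c d : ℝ, a * b - c * d = d * (a - c) + a * (b - d) by
    intros; ring]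
  calc _ ≤ (1 + τ * ω' τ) * |exp (ω t) - exp (ω τ)| + exp (ω t) * |t * ω' t - τ * ω' τ| := by
        refine (abs_add_le _ _).trans_eq ?_
        rw [abs_mul, abs_mul, abs_of_pos (hgpos τ hτ), abs_of_pos (exp_pos _),
          add_sub_add_left_eq_sub]
    _ ≤ (1 + Cg) * (exp Cω * |ω t - ω τ|) + exp Cω * |t * ω' t - τ * ω' τ| := by
        gcongr
        · linarith [hgle τ hτ]
        · exact abs_exp_sub_exp_le (hωle t ht) (hωle τ hτ)
        · exact hωle t ht
    _ = _ := by ring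

lemma exp_neg_le_deriv_of_strictMonoOn {α α' : ℝ → ℝ} {C t : ℝ} (hmono : StrictMonoOn α (Ioi 0))
    (hderiv : ∀ u ∈ Ioi (0:ℝ), HasDerivAt α (α' u) u) (hα'c : ContinuousOn α' (Ioi 0))
    (hC : ∀ u ∈ Ioi (0:ℝ), |log (α' u)| ≤ C) (ht : 0 < t) : exp (-C) ≤ α' t := by
  have hsub : Icc (1:ℝ) 2 ⊆ Ioi 0 := fun u hu => one_pos.trans_le hu.1
  obtain ⟨ξ, hξ, hslope⟩ := exists_hasDerivAt_eq_slope α α' one_lt_two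
    (fun u hu => (hderiv u (hsub hu)).continuousAt.continuousWithinAt)
    (fun u hu => hderiv u (hsub (Ioo_subset_Icc_self hu)))
  have hpos : 0 < α' ξ := by
    rw [hslope]
    exact div_pos (sub_pos.2 (hmono (mem_Ioi.2 one_pos) (mem_Ioi.2 two_pos) one_lt_two))
      (by norm_num)
  exact exp_neg_le_of_abs_log_le_of_isPreconnected isPreconnected_Ioi hα'c hC
    (hsub (Ioo_subset_Icc_self hξ)) hpos ht

lemma exists_exp_representation_of_tendsto_deriv_sub_div {α α' : ℝ → ℝ} {C : ℝ}
    (hderiv : ∀ t ∈ Ioi (0:ℝ), HasDerivAt α (α' t) t) (hα'c : ContinuousOn α' (Ioi 0))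
    (hα' : ∀ t ∈ Ioi (0:ℝ), α' t ∈ Icc (exp (-C)) (exp C))
    (hα : ∀ t ∈ Ioi (0:ℝ), α t ∈ Icc (exp (-C) * t) (exp C * t))
    (hzero : Tendsto (fun t => α' t - α t / t) (𝓝[>] 0) (𝓝 0))
    (htop : Tendsto (fun t => α' t - α t / t) atTop (𝓝 0)) :
    ∃ ω ω' : ℝ → ℝ, (∀ t ∈ Ioi (0:ℝ), α t = t * exp (ω t)) ∧ SO ω ∧
      (∀ t ∈ Ioi (0:ℝ), HasDerivAt ω (ω' t) t) ∧ ContinuousOn ω' (Ioi 0) ∧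
      SO (fun t => t * ω' t) ∧ ∃ ε > (0:ℝ), ∀ t ∈ Ioi (0:ℝ), ε ≤ 1 + t * ω' t := by
  have hαpos : ∀ t ∈ Ioi (0:ℝ), 0 < α t := fun t ht =>
    (mul_pos (exp_pos _) ht).trans_le (hα t ht).1
  have hαdiv : ∀ t ∈ Ioi (0:ℝ), α t / t ∈ Icc (exp (-C)) (exp C) := fun t ht => by
    rw [mem_Icc, le_div_iff₀ ht, div_le_iff₀ ht]
    exact hα t ht
  have hdivα : ∀ t ∈ Ioi (0:ℝ), t / α t ∈ Icc (exp (-C)) (exp C) := fun t ht => by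
    rw [← inv_div, mem_Icc, le_inv_comm₀ (exp_pos _) (div_pos (hαpos t ht) ht),
      inv_le_comm₀ (div_pos (hαpos t ht) ht) (exp_pos _), ← exp_neg, ← exp_neg, neg_neg]
    exact (hαdiv t ht).symm
  set ω : ℝ → ℝ := fun t => log (α t) - log t
  set ω' : ℝ → ℝ := fun t => α' t / α t - t⁻¹
  have hωd : ∀ t ∈ Ioi (0:ℝ), HasDerivAt ω (ω' t) t := fun t ht =>
    ((hderiv t ht).log (hαpos t ht).ne').sub (hasDerivAt_log (ne_of_gt ht))
  have hω'c : ContinuousOn ω' (Ioi 0) :=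
    (hα'c.div (fun t ht => (hderiv t ht).continuousAt.continuousWithinAt)
      fun t ht => (hαpos t ht).ne').sub
      (continuousOn_inv₀.mono fun t ht => ne_of_gt (mem_Ioi.1 ht))
  have hω : ∀ t ∈ Ioi (0:ℝ), ‖ω t‖ ≤ C := fun t ht => by
    have hpos := div_pos (hαpos t ht) ht
    simp only [ω]
    rw [Real.norm_eq_abs, ← log_div (hαpos t ht).ne' (ne_of_gt ht), abs_le]
    exact ⟨(le_log_iff_exp_le hpos).2 (hαdiv t ht).1, (log_le_iff_le_exp hpos).2 (hαdiv t ht).2⟩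
  have hg1 : ∀ t ∈ Ioi (0:ℝ), 1 + t * ω' t ∈ Icc (exp (-C) * exp (-C)) (exp C * exp C) :=
    fun t ht => by
      have := (hαpos t ht).ne'
      have := (mem_Ioi.1 ht).ne'
      have hsplit : 1 + t * ω' t = t / α t * α' t := by
        simp only [ω']
        field_simp
        ring
      rw [hsplit]
      exact ⟨mul_le_mul (hdivα t ht).1 (hα' t ht).1 (exp_pos _).le
          ((exp_pos _).le.trans (hdivα t ht).1),
        mul_le_mul (hdivα t ht).2 (hα' t ht).2 ((exp_pos _).le.trans (hα' t ht).1) (exp_pos _).le⟩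
  have hg : ∀ t ∈ Ioi (0:ℝ), ‖t * ω' t‖ ≤ exp C * exp C + 1 := fun t ht => by
    have := (hg1 t ht).1
    have := (hg1 t ht).2
    rw [Real.norm_eq_abs, abs_le]
    constructor <;> nlinarith [exp_pos (-C)]
  have hg0 : Tendsto (fun t => t * ω' t) (𝓝[>] 0) (𝓝 0) :=
    tendsto_mul_div_sub_inv self_mem_nhdsWithin hαpos (fun t ht => (hdivα t ht).2) hzero
  have hgtop : Tendsto (fun t => t * ω' t) atTop (𝓝 0) :=
    tendsto_mul_div_sub_inv (eventually_gt_atTop 0) hαpos (fun t ht => (hdivα t ht).2) htop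
  refine ⟨ω, ω', fun t ht => ?_, SO.of_tendsto_mul_deriv hωd ⟨C, hω⟩ hg0 hgtop, hωd, hω'c,
    SO.of_tendsto (continuousOn_id.mul hω'c) ⟨_, hg⟩ hg0 hgtop,
    exp (-C) * exp (-C), by positivity, fun t ht => (hg1 t ht).1⟩
  simp only [ω]
  rw [exp_sub, exp_log (hαpos t ht), exp_log ht, mul_div_cancel₀ _ (ne_of_gt ht)]

lemma exists_exp_representation_of_abs_log_deriv_le {α α' : ℝ → ℝ} {C : ℝ}
    (hmono : StrictMonoOn α (Ioi 0)) (hderiv : ∀ t ∈ Ioi (0:ℝ), HasDerivAt α (α' t) t)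
    (hα'c : ContinuousOn α' (Ioi 0)) (h0 : Tendsto α (𝓝[>] 0) (𝓝 0))
    (hC : ∀ t ∈ Ioi (0:ℝ), |log (α' t)| ≤ C) (hSO : SO α') :
    ∃ ω ω' : ℝ → ℝ, (∀ t ∈ Ioi (0:ℝ), α t = t * exp (ω t)) ∧ SO ω ∧
      (∀ t ∈ Ioi (0:ℝ), HasDerivAt ω (ω' t) t) ∧ ContinuousOn ω' (Ioi 0) ∧
      SO (fun t => t * ω' t) ∧ ∃ ε > (0:ℝ), ∀ t ∈ Ioi (0:ℝ), ε ≤ 1 + t * ω' t := by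
  have hα' : ∀ t ∈ Ioi (0:ℝ), α' t ∈ Icc (exp (-C)) (exp C) := fun t ht =>
    ⟨exp_neg_le_deriv_of_strictMonoOn hmono hderiv hα'c hC ht,
      le_exp_of_log_le (le_of_abs_le (hC t ht))⟩
  have hα : ∀ t ∈ Ioi (0:ℝ), α t ∈ Icc (exp (-C) * t) (exp C * t) := fun t ht =>
    ⟨mul_le_of_le_deriv_of_tendsto_zero hderiv h0 (fun u hu => (hα' u hu).1) ht,
      le_mul_of_deriv_le_of_tendsto_zero hderiv h0 (fun u hu => (hα' u hu).2) ht⟩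
  have hα'abs : ∀ t ∈ Ioi (0:ℝ), |α' t| ≤ exp C := fun t ht =>
    abs_le.2 ⟨by linarith [(hα' t ht).1, exp_pos (-C), exp_pos C], (hα' t ht).2⟩
  have hαabs : ∀ t ∈ Ioi (0:ℝ), |α t| ≤ exp C * t := fun t ht =>
    abs_le.2 ⟨by nlinarith [(hα t ht).1, exp_pos (-C), exp_pos C, mem_Ioi.1 ht], (hα t ht).2⟩
  exact exists_exp_representation_of_tendsto_deriv_sub_div hderiv hα'c hα' hα
    (tendsto_deriv_sub_div hderiv hα'c hα'abs hαabs self_mem_nhdsWithin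
      fun l hl => (hSO.2.2 l hl).1)
    (tendsto_deriv_sub_div hderiv hα'c hα'abs hαabs (eventually_gt_atTop 0)
      fun l hl => (hSO.2.2 l hl).2)

theorem exponential_representation_general (α α' : ℝ → ℝ)
    (hmono : StrictMonoOn α (Set.Ioi 0))
    (hderiv : ∀ t ∈ Set.Ioi (0:ℝ), HasDerivAt α (α' t) t)
    (hderiv_cont : ContinuousOn α' (Set.Ioi 0))
    (h0 : Tendsto α (nhdsWithin 0 (Set.Ioi 0)) (nhds 0)) :
    ((∃ C, ∀ t ∈ Set.Ioi (0:ℝ), |Real.log (α' t)| ≤ C) ∧ SO α') ↔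
    (∃ ω ω' : ℝ → ℝ,
      (∀ t ∈ Set.Ioi (0:ℝ), α t = t * Real.exp (ω t)) ∧
      SO ω ∧
      (∀ t ∈ Set.Ioi (0:ℝ), HasDerivAt ω (ω' t) t) ∧
      ContinuousOn ω' (Set.Ioi 0) ∧
      SO (fun t => t * ω' t) ∧
      (∃ ε > (0:ℝ), ∀ t ∈ Set.Ioi (0:ℝ), ε ≤ 1 + t * ω' t)) := by
  constructor
  · rintro ⟨⟨C, hC⟩, hSO⟩
    exact exists_exp_representation_of_abs_log_deriv_le hmono hderiv hderiv_cont h0 hC hSO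
  · rintro ⟨ω, ω', hform, hω, hωd, -, hg, ε, hε, hεg⟩
    exact abs_log_deriv_bdd_and_SO_deriv_of_exp_representation hderiv hderiv_cont hform hω hωd
      hg hε hεg

/-- Exponential representation of slowly oscillating shifts. -/
theorem exponential_representation (α α' : ℝ → ℝ)
    (hbij : Set.BijOn α (Set.Ioi 0) (Set.Ioi 0))
    (hmono : StrictMonoOn α (Set.Ioi 0))
    (hderiv : ∀ t ∈ Set.Ioi (0:ℝ), HasDerivAt α (α' t) t)
    (hderiv_cont : ContinuousOn α' (Set.Ioi 0))
    (h0 : Tendsto α (nhdsWithin 0 (Set.Ioi 0)) (nhds 0))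
    (hinf : Tendsto α atTop atTop)
    (hfix : ∀ t ∈ Set.Ioi (0:ℝ), α t ≠ t) :
    ((∃ C, ∀ t ∈ Set.Ioi (0:ℝ), |Real.log (α' t)| ≤ C) ∧ SO α') ↔
    (∃ ω ω' : ℝ → ℝ,
      (∀ t ∈ Set.Ioi (0:ℝ), α t = t * Real.exp (ω t)) ∧
      SO ω ∧
      (∀ t ∈ Set.Ioi (0:ℝ), HasDerivAt ω (ω' t) t) ∧
      ContinuousOn ω' (Set.Ioi 0) ∧
      SO (fun t => t * ω' t) ∧
      (∃ ε > (0:ℝ), ∀ t ∈ Set.Ioi (0:ℝ), ε ≤ 1 + t * ω' t)) :=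
  exponential_representation_general α α' hmono hderiv hderiv_cont h0
end

section
/- Let 1 < p < ∞ and let ω : (0,∞) → ℝ be a bounded continuous slowly oscillating function. Then the function 𝔠(t,·) : x ↦ e^{iω(t)(x+i/p)} / sinh(π(x+i/p)) satisfies: there is a constant L < ∞ with ‖𝔠(t,·) − 𝔠(τ,·)‖_{L^∞(ℝ)} + ∫_ℝ |∂_x 𝔠(t,x) − ∂_x 𝔠(τ,x)| dx ≤ L |ω(t) − ω(τ)| for all t, τ ∈ (0,∞); consequently t ↦ 𝔠(t,·) is a bounded continuous map from (0,∞) into the Banach space V(ℝ) of absolutely continuous functions of finite total variation with norm ‖f‖_V = ‖f‖_∞ + ∫|f'|. -/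
open Filter Set Complex MeasureTheory

/-- `𝔠(t,x) = e^{iω(t)(x+i/p)} / sinh(π(x+i/p))`. -/
noncomputable def cFun (p : ℝ) (ω : ℝ → ℝ) (t x : ℝ) : ℂ :=
  Complex.exp (Complex.I * (ω t) * (x + Complex.I / p)) /
    Complex.sinh ((Real.pi : ℂ) * (x + Complex.I / p))

/-- The `V(ℝ)`-norm distance between the symbols `𝔠(t,·)` and `𝔠(τ,·)`. -/
noncomputable def Vdist (p : ℝ) (ω : ℝ → ℝ) (t τ : ℝ) : ℝ :=
  (⨆ x : ℝ, ‖cFun p ω t x - cFun p ω τ x‖) +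
    ∫ x : ℝ, ‖deriv (cFun p ω t) x - deriv (cFun p ω τ) x‖

/-!
Write `z = x + i/p` and `m = sin (π/p) > 0`. Since `|sinh (πz)| ≥ m cosh (πx)` and
`cosh (πx)` outgrows `(1 + |x|)³`, the symbol `e^{iaz} / sinh (πz)` and, by the mean value
theorem in the frequency `a`, its difference quotient in `a` are `O((1 + x²)⁻¹)` uniformly
for bounded `a`. The `x`-derivative is `(ia - r) 𝔠` with `r = π coth (πz)`, `|r| ≤ π/m`, and
`(ia - r) u - (ib - r) v = i (a - b) u + (ib - r) (u - v)` reduces the derivative estimates to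
the previous ones. Integrating the envelope `(1 + x²)⁻¹` gives the Lipschitz bound in the
`V`-norm, and continuity then comes from that of `ω`.
-/

open scoped Real

theorem norm_sinh_add_mul_I_sq (u v : ℝ) :
    ‖Complex.sinh (u + v * I)‖ ^ 2 = Real.sinh u ^ 2 + Real.sin v ^ 2 := by
  rw [Complex.sinh_add, sinh_mul_I, cosh_mul_I, ← ofReal_sinh, ← ofReal_cosh, ← ofReal_sin,
    ← ofReal_cos, Complex.sq_norm, ← ofReal_mul, ← mul_assoc, ← ofReal_mul, normSq_add_mul_I]
  nlinarith [Real.cosh_sq u, Real.sin_sq_add_cos_sq v]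

theorem norm_cosh_add_mul_I_sq (u v : ℝ) :
    ‖Complex.cosh (u + v * I)‖ ^ 2 = Real.sinh u ^ 2 + Real.cos v ^ 2 := by
  rw [Complex.cosh_add, sinh_mul_I, cosh_mul_I, ← ofReal_sinh, ← ofReal_cosh, ← ofReal_sin,
    ← ofReal_cos, Complex.sq_norm, ← ofReal_mul, ← mul_assoc, ← ofReal_mul, normSq_add_mul_I]
  nlinarith [Real.cosh_sq u, Real.sin_sq_add_cos_sq v]

theorem abs_sin_mul_cosh_le_norm_sinh (u v : ℝ) :
    |Real.sin v| * Real.cosh u ≤ ‖Complex.sinh (u + v * I)‖ := by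
  refine le_of_sq_le_sq ?_ (norm_nonneg _)
  rw [norm_sinh_add_mul_I_sq, mul_pow, sq_abs, Real.cosh_sq]
  nlinarith [Real.sin_sq_le_one v, sq_nonneg (Real.sinh u)]

theorem abs_sin_mul_norm_cosh_le_norm_sinh (u v : ℝ) :
    |Real.sin v| * ‖Complex.cosh (u + v * I)‖ ≤ ‖Complex.sinh (u + v * I)‖ := by
  refine le_of_sq_le_sq ?_ (norm_nonneg _)
  rw [norm_sinh_add_mul_I_sq, mul_pow, norm_cosh_add_mul_I_sq, sq_abs]
  nlinarith [Real.sin_sq_le_one v, sq_nonneg (Real.sinh u), Real.sin_sq_add_cos_sq v,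
    mul_nonneg (sq_nonneg (Real.sin v)) (sq_nonneg (Real.cos v))]

theorem one_add_abs_mul_one_add_sq_le_two_mul_cosh (x : ℝ) :
    (1 + |x|) * (1 + x ^ 2) ≤ 2 * Real.cosh (π * x) := by
  have h3 : (1 + |x|) ^ 3 ≤ rexp (π * |x|) :=
    calc (1 + |x|) ^ 3 ≤ rexp |x| ^ 3 := by
          gcongr; linarith [Real.add_one_le_exp |x|]
      _ = rexp (3 * |x|) := by rw [← Real.exp_nat_mul]; norm_num
      _ ≤ rexp (π * |x|) := by gcongr; exact Real.pi_gt_three.le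
  have hcosh : rexp (π * |x|) ≤ 2 * Real.cosh (π * x) := by
    rw [← Real.cosh_abs, abs_mul, abs_of_pos Real.pi_pos, Real.cosh_eq]
    linarith [Real.exp_pos (-(π * |x|))]
  nlinarith [abs_nonneg x, sq_abs x]

theorem iSup_add_integral_le_of_le_inv_one_add_sq {E F : Type*} [NormedAddCommGroup E]
    [NormedAddCommGroup F] {u : ℝ → E} {v : ℝ → F} {M N : ℝ}
    (hu : ∀ x, ‖u x‖ ≤ M * (1 + x ^ 2)⁻¹) (hv : ∀ x, ‖v x‖ ≤ N * (1 + x ^ 2)⁻¹) :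
    (⨆ x, ‖u x‖) + ∫ x, ‖v x‖ ≤ M + π * N := by
  have hM : 0 ≤ M := by simpa using (norm_nonneg _).trans (hu 0)
  have hsup : (⨆ x, ‖u x‖) ≤ M := ciSup_le fun x =>
    (hu x).trans (mul_le_of_le_one_right hM (inv_le_one_of_one_le₀ (by nlinarith)))
  have hint : ∫ x, ‖v x‖ ≤ π * N := by
    calc ∫ x, ‖v x‖ ≤ ∫ x, N * (1 + x ^ 2)⁻¹ :=
          integral_mono_of_nonneg (.of_forall fun _ => norm_nonneg _)
            (integrable_inv_one_add_sq.const_mul N) (.of_forall hv)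
      _ = π * N := by rw [integral_const_mul, integral_univ_inv_one_add_sq, mul_comm]
  linarith

theorem norm_cexp_I_mul_le {C s : ℝ} (hs : |s| ≤ C) (z : ℂ) :
    ‖cexp (I * s * z)‖ ≤ rexp (C * |z.im|) := by
  rw [norm_exp]
  gcongr
  have : (I * s * z).re = -(s * z.im) := by simp
  rw [this]
  calc -(s * z.im) ≤ |s| * |z.im| := by rw [← abs_mul]; exact neg_le_abs _
    _ ≤ C * |z.im| := by gcongr

theorem norm_cexp_I_mul_sub_le {C a b : ℝ} (ha : |a| ≤ C) (hb : |b| ≤ C) (z : ℂ) :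
    ‖cexp (I * a * z) - cexp (I * b * z)‖ ≤ rexp (C * |z.im|) * ‖z‖ * |a - b| := by
  have hderiv : ∀ s ∈ Icc (-C) C, HasDerivWithinAt (fun s : ℝ => cexp (I * s * z))
      (cexp (I * s * z) * (I * z)) (Icc (-C) C) s := fun s _ => by
    have : HasDerivAt (fun s : ℝ => I * s * z) (I * z) s := by
      simpa using ((ofRealCLM.hasDerivAt (x := s)).const_mul I).mul_const z
    exact this.cexp.hasDerivWithinAt
  have hbound : ∀ s ∈ Icc (-C) C, ‖cexp (I * s * z) * (I * z)‖ ≤ rexp (C * |z.im|) * ‖z‖ :=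
    fun s hs => by
      rw [norm_mul, norm_mul, norm_I, one_mul]
      gcongr
      exact norm_cexp_I_mul_le (abs_le.2 hs) z
  simpa [Real.norm_eq_abs] using (convex_Icc (-C) C).norm_image_sub_le_of_norm_hasDerivWithin_le
    hderiv hbound (abs_le.1 hb) (abs_le.1 ha)

section Symbol

variable {p : ℝ}

noncomputable def piCoth (p x : ℝ) : ℂ :=
  π * Complex.cosh (π * (x + I / p)) / Complex.sinh (π * (x + I / p))

theorem sin_pi_div_pos (hp : 1 < p) : 0 < Real.sin (π / p) :=
  Real.sin_pos_of_pos_of_lt_pi (div_pos Real.pi_pos (by linarith))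
    (div_lt_self Real.pi_pos hp)

theorem pi_mul_add_I_div (p x : ℝ) :
    (π : ℂ) * (x + I / p) = ↑(π * x) + ↑(π / p) * I := by
  push_cast; ring

theorem sin_pi_div_mul_cosh_le_norm_sinh (hp : 1 < p) (x : ℝ) :
    Real.sin (π / p) * Real.cosh (π * x) ≤ ‖Complex.sinh (π * (x + I / p))‖ := by
  simpa [pi_mul_add_I_div, abs_of_pos (sin_pi_div_pos hp)] using
    abs_sin_mul_cosh_le_norm_sinh (π * x) (π / p)

theorem norm_sinh_pos (hp : 1 < p) (x : ℝ) : 0 < ‖Complex.sinh (π * (x + I / p))‖ :=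
  (mul_pos (sin_pi_div_pos hp) (Real.cosh_pos _)).trans_le
    (sin_pi_div_mul_cosh_le_norm_sinh hp x)

theorem one_add_abs_div_norm_sinh_le (hp : 1 < p) (x : ℝ) :
    (1 + |x|) / ‖Complex.sinh (π * (x + I / p))‖ ≤ 2 / Real.sin (π / p) * (1 + x ^ 2)⁻¹ := by
  have hm := sin_pi_div_pos hp
  rw [div_le_iff₀ (norm_sinh_pos hp x)]
  calc 1 + |x| = 2 / Real.sin (π / p) * (1 + x ^ 2)⁻¹ *
        (Real.sin (π / p) * ((1 + |x|) * (1 + x ^ 2) / 2)) := by field_simp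
    _ ≤ 2 / Real.sin (π / p) * (1 + x ^ 2)⁻¹ * (Real.sin (π / p) * Real.cosh (π * x)) := by
        gcongr
        linarith [one_add_abs_mul_one_add_sq_le_two_mul_cosh x]
    _ ≤ _ := by gcongr; exact sin_pi_div_mul_cosh_le_norm_sinh hp x

theorem norm_piCoth_le (hp : 1 < p) (x : ℝ) : ‖piCoth p x‖ ≤ π / Real.sin (π / p) := by
  have hm := sin_pi_div_pos hp
  have hcosh : Real.sin (π / p) * ‖Complex.cosh (π * (x + I / p))‖ ≤
      ‖Complex.sinh (π * (x + I / p))‖ := by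
    simpa [pi_mul_add_I_div, abs_of_pos hm] using
      abs_sin_mul_norm_cosh_le_norm_sinh (π * x) (π / p)
  rw [piCoth, norm_div, norm_mul, norm_real, Real.norm_of_nonneg Real.pi_pos.le,
    div_le_div_iff₀ (norm_sinh_pos hp x) hm]
  nlinarith [Real.pi_pos]

theorem norm_add_I_div_le (hp : 1 < p) (x : ℝ) : ‖(x : ℂ) + I / p‖ ≤ 1 + |x| := by
  calc ‖(x : ℂ) + I / p‖ ≤ |x| + 1 / p := by
        refine (norm_add_le _ _).trans_eq ?_
        rw [norm_real, norm_div, norm_I, norm_real, Real.norm_eq_abs, Real.norm_eq_abs,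
          abs_of_pos (by linarith : 0 < p)]
    _ ≤ 1 + |x| := by
        linarith [(div_le_one (by linarith : (0:ℝ) < p)).2 hp.le]

theorem abs_im_add_I_div (hp : 0 < p) (x : ℝ) : |((x : ℂ) + I / p).im| = p⁻¹ := by
  simp [abs_of_pos hp]

theorem norm_cFun_le {ω : ℝ → ℝ} {t C : ℝ} (hp : 1 < p) (ht : |ω t| ≤ C) (x : ℝ) :
    ‖cFun p ω t x‖ ≤ 2 * rexp (C / p) / Real.sin (π / p) * (1 + x ^ 2)⁻¹ := by
  have hexp := norm_cexp_I_mul_le ht (x + I / p)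
  rw [abs_im_add_I_div (by linarith), ← div_eq_mul_inv] at hexp
  rw [cFun, norm_div]
  calc ‖cexp (I * ω t * (x + I / p))‖ / ‖Complex.sinh (π * (x + I / p))‖
      ≤ rexp (C / p) * ((1 + |x|) / ‖Complex.sinh (π * (x + I / p))‖) := by
        rw [mul_div_assoc']
        gcongr
        exact hexp.trans (le_mul_of_one_le_right (Real.exp_pos _).le (by simp))
    _ ≤ rexp (C / p) * (2 / Real.sin (π / p) * (1 + x ^ 2)⁻¹) := by
        gcongr; exact one_add_abs_div_norm_sinh_le hp x
    _ = _ := by ring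

theorem norm_cFun_sub_le {ω : ℝ → ℝ} {t τ C : ℝ} (hp : 1 < p) (ht : |ω t| ≤ C)
    (hτ : |ω τ| ≤ C) (x : ℝ) :
    ‖cFun p ω t x - cFun p ω τ x‖ ≤
      2 * rexp (C / p) / Real.sin (π / p) * |ω t - ω τ| * (1 + x ^ 2)⁻¹ := by
  have hexp := norm_cexp_I_mul_sub_le ht hτ (x + I / p)
  rw [abs_im_add_I_div (by linarith), ← div_eq_mul_inv] at hexp
  rw [cFun, cFun, div_sub_div_same, norm_div]
  calc ‖cexp (I * ω t * (x + I / p)) - cexp (I * ω τ * (x + I / p))‖ /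
        ‖Complex.sinh (π * (x + I / p))‖
      ≤ rexp (C / p) * (1 + |x|) * |ω t - ω τ| / ‖Complex.sinh (π * (x + I / p))‖ := by
        gcongr
        exact hexp.trans (by gcongr; exact norm_add_I_div_le hp x)
    _ = rexp (C / p) * |ω t - ω τ| * ((1 + |x|) / ‖Complex.sinh (π * (x + I / p))‖) := by
        ring
    _ ≤ rexp (C / p) * |ω t - ω τ| * (2 / Real.sin (π / p) * (1 + x ^ 2)⁻¹) := by
        gcongr; exact one_add_abs_div_norm_sinh_le hp x
    _ = _ := by ring

theorem hasDerivAt_cFun (hp : 1 < p) (ω : ℝ → ℝ) (t x : ℝ) :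
    HasDerivAt (cFun p ω t) ((I * ω t - piCoth p x) * cFun p ω t x) x := by
  have hz : HasDerivAt (fun y : ℝ => (y : ℂ) + I / p) 1 x :=
    ofRealCLM.hasDerivAt.add_const _
  have hsinh : HasDerivAt (fun y : ℝ => Complex.sinh (π * (y + I / p)))
      (Complex.cosh (π * (x + I / p)) * (π * 1)) x :=
    (Complex.hasDerivAt_sinh _).comp x (hz.const_mul _)
  have hS := norm_pos_iff.1 (norm_sinh_pos hp x)
  refine ((hz.const_mul (I * ω t)).cexp.div hsinh hS).congr_deriv ?_
  simp only [cFun, piCoth]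
  generalize Complex.sinh (π * (x + I / p)) = S at hS ⊢
  field_simp

theorem norm_I_mul_sub_piCoth_le (hp : 1 < p) (s x : ℝ) :
    ‖I * s - piCoth p x‖ ≤ |s| + π / Real.sin (π / p) := by
  refine (norm_sub_le _ _).trans (add_le_add (le_of_eq ?_) (norm_piCoth_le hp x))
  simp

theorem norm_deriv_cFun_le (hp : 1 < p) (ω : ℝ → ℝ) (t x : ℝ) :
    ‖deriv (cFun p ω t) x‖ ≤ (|ω t| + π / Real.sin (π / p)) * ‖cFun p ω t x‖ := by
  rw [(hasDerivAt_cFun hp ω t x).deriv, norm_mul]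
  gcongr
  exact norm_I_mul_sub_piCoth_le hp _ x

theorem norm_deriv_cFun_sub_le (hp : 1 < p) (ω : ℝ → ℝ) (t τ x : ℝ) :
    ‖deriv (cFun p ω t) x - deriv (cFun p ω τ) x‖ ≤
      |ω t - ω τ| * ‖cFun p ω t x‖ +
        (|ω τ| + π / Real.sin (π / p)) * ‖cFun p ω t x - cFun p ω τ x‖ := by
  rw [(hasDerivAt_cFun hp ω t x).deriv, (hasDerivAt_cFun hp ω τ x).deriv]
  calc _ = ‖I * ↑(ω t - ω τ) * cFun p ω t x +
        (I * ω τ - piCoth p x) * (cFun p ω t x - cFun p ω τ x)‖ := by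
        congr 1; push_cast; ring
    _ ≤ _ := by
        refine (norm_add_le _ _).trans (add_le_add (le_of_eq ?_) ?_)
        · rw [norm_mul, norm_mul, norm_I, one_mul, norm_real, Real.norm_eq_abs]
        · rw [norm_mul]
          gcongr
          exact norm_I_mul_sub_piCoth_le hp _ x

theorem Vdist_le {ω : ℝ → ℝ} {t τ C : ℝ} (hp : 1 < p) (ht : |ω t| ≤ C) (hτ : |ω τ| ≤ C) :
    Vdist p ω t τ ≤ (1 + π * (1 + C + π / Real.sin (π / p))) *
      (2 * rexp (C / p) / Real.sin (π / p)) * |ω t - ω τ| := by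
  have hm := sin_pi_div_pos hp
  have hC : 0 ≤ C := (abs_nonneg _).trans ht
  set K := 2 * rexp (C / p) / Real.sin (π / p)
  have hderiv : ∀ x, ‖deriv (cFun p ω t) x - deriv (cFun p ω τ) x‖ ≤
      (1 + C + π / Real.sin (π / p)) * (K * |ω t - ω τ|) * (1 + x ^ 2)⁻¹ := fun x =>
    calc _ ≤ |ω t - ω τ| * (K * (1 + x ^ 2)⁻¹) +
          (C + π / Real.sin (π / p)) * (K * |ω t - ω τ| * (1 + x ^ 2)⁻¹) := by
          refine (norm_deriv_cFun_sub_le hp ω t τ x).trans ?_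
          gcongr
          · exact norm_cFun_le hp ht x
          · exact norm_cFun_sub_le hp ht hτ x
      _ = _ := by ring
  have := iSup_add_integral_le_of_le_inv_one_add_sq (norm_cFun_sub_le hp ht hτ) hderiv
  rw [Vdist]
  linarith

theorem iSup_add_integral_norm_cFun_le {ω : ℝ → ℝ} {t C : ℝ} (hp : 1 < p) (ht : |ω t| ≤ C) :
    (⨆ x, ‖cFun p ω t x‖) + ∫ x, ‖deriv (cFun p ω t) x‖ ≤
      (1 + π * (C + π / Real.sin (π / p))) * (2 * rexp (C / p) / Real.sin (π / p)) := by
  have hm := sin_pi_div_pos hp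
  have hC : 0 ≤ C := (abs_nonneg _).trans ht
  have hderiv : ∀ x, ‖deriv (cFun p ω t) x‖ ≤ (C + π / Real.sin (π / p)) *
      (2 * rexp (C / p) / Real.sin (π / p)) * (1 + x ^ 2)⁻¹ := fun x => by
    rw [mul_assoc]
    exact (norm_deriv_cFun_le hp ω t x).trans (by gcongr; exact norm_cFun_le hp ht x)
  have := iSup_add_integral_le_of_le_inv_one_add_sq (norm_cFun_le hp ht) hderiv
  linarith

theorem Vdist_nonneg (p : ℝ) (ω : ℝ → ℝ) (t τ : ℝ) : 0 ≤ Vdist p ω t τ :=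
  add_nonneg (Real.iSup_nonneg fun _ => norm_nonneg _) (integral_nonneg fun _ => norm_nonneg _)

end Symbol

theorem cFun_bounded_continuous_into_V (p : ℝ) (hp : 1 < p)
    (ω : ℝ → ℝ) (hω : SO ω) :
    (∃ L, ∀ t ∈ Set.Ioi (0:ℝ), ∀ τ ∈ Set.Ioi (0:ℝ),
      Vdist p ω t τ ≤ L * |ω t - ω τ|) ∧
    (∃ K, ∀ t ∈ Set.Ioi (0:ℝ),
      (⨆ x : ℝ, ‖cFun p ω t x‖) +
        (∫ x : ℝ, ‖deriv (cFun p ω t) x‖) ≤ K) ∧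
    (∀ t ∈ Set.Ioi (0:ℝ),
      Tendsto (fun τ => Vdist p ω t τ) (nhdsWithin t (Set.Ioi 0)) (nhds 0)) := by
  obtain ⟨hcont, ⟨C, hC⟩, -⟩ := hω
  obtain ⟨L, hL⟩ : ∃ L, ∀ t ∈ Ioi (0:ℝ), ∀ τ ∈ Ioi (0:ℝ), Vdist p ω t τ ≤ L * |ω t - ω τ| :=
    ⟨_, fun t ht τ hτ => Vdist_le hp (hC t ht) (hC τ hτ)⟩
  refine ⟨⟨L, hL⟩, ⟨_, fun t ht => iSup_add_integral_norm_cFun_le hp (hC t ht)⟩, fun t ht => ?_⟩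
  have hlim : Tendsto (fun τ => L * |ω t - ω τ|) (nhdsWithin t (Ioi 0)) (nhds 0) := by
    simpa using (((hcont t ht).const_sub (ω t)).abs.const_mul L)
  exact squeeze_zero' (.of_forall fun τ => Vdist_nonneg p ω t τ)
    (eventually_nhdsWithin_of_forall fun τ hτ => hL t ht τ hτ) hlim
end
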